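/- arXiv:2105.04164 — 2 statements merged into one kernel-verified Lean document; each statement's English description precedes it below -/
import Mathlib

section
/- If a directed graph has a node j with at least two out-neighbors i, i' that each have in-degree 1 (only the edge from j), then the system with adjacency matrix A (where A(i,j) ≠ 0 iff edge j→i) cannot be controllable with an input matrix B whose nonzero rows avoid both i and i', regardless of the free weight values: the rows i and i' of the Kalman matrix are proportional. -/
/-!
Each of the rows `i`, `i'` of `A` is a multiple of the `j`-th unit row, so row `i` of `A` is
`c = A i j / A i' j` times row `i'`. Row `i` of `A * X` is then `c` times row `i'` of `A * X`
for every `X`, and since the rows `i`, `i'` of `B` vanish, induction on `k` gives the same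
relation for every block `A ^ k * B` of the Kalman matrix. Two distinct proportional rows make
the rows linearly dependent, so the rank is below the number of rows.
-/

theorem Pi.eq_div_smul_of_eq_zero_of_ne {ι K : Type*} [Field K] {f g : ι → K} {j : ι}
    (hf : ∀ l, l ≠ j → f l = 0) (hg : ∀ l, l ≠ j → g l = 0) (hgj : g j ≠ 0) :
    f = (f j / g j) • g := by
  funext l
  by_cases hl : l = j
  · subst hl
    simp [hgj]
  · simp [hf l hl, hg l hl]

namespace Matrix

variable {m n o R : Type*}

theorem mul_row_eq_smul_of_row_eq_smul [Fintype n] [CommSemiring R] {A : Matrix m n R}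
    (X : Matrix n o R) {i i' : m} {c : R} (hA : A i = c • A i') :
    (A * X) i = c • (A * X) i' := by
  funext q
  simp [mul_apply, hA, Finset.mul_sum, mul_assoc]

theorem pow_mul_row_eq_smul_of_row_eq_smul [Fintype m] [DecidableEq m] [CommSemiring R]
    {A : Matrix m m R} {B : Matrix m n R} {i i' : m} {c : R}
    (hA : A i = c • A i') (hB : B i = c • B i') (k : ℕ) :
    (A ^ k * B) i = c • (A ^ k * B) i' := by
  induction k with
  | zero => simpa using hB
  | succ k _ =>
    rw [pow_succ', Matrix.mul_assoc]
    exact mul_row_eq_smul_of_row_eq_smul _ hA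

theorem rank_lt_card_height_of_row_eq_smul [Fintype m] [Fintype n] [Field R] {Q : Matrix m n R}
    {i i' : m} (hne : i ≠ i') {c : R} (hQ : Q i = c • Q i') :
    Q.rank < Fintype.card m := by
  have hdep : ¬ LinearIndependent R Q.row := fun hli =>
    hli.notMem_span_image (s := {i'}) (x := i) hne <| by
      rw [Set.image_singleton, row, hQ]
      exact Submodule.mem_span_singleton.mpr ⟨c, rfl⟩
  refine lt_of_le_of_ne (rank_le_card_height Q) fun hcard => hdep ?_
  rw [linearIndependent_iff_card_eq_finrank_span, ← hcard, rank_eq_finrank_span_row, Set.finrank]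

end Matrix

theorem two_out_neighbors_unique_in_edge_not_controllable_general
    (N M : ℕ) (A : Matrix (Fin N) (Fin N) ℝ) (B : Matrix (Fin N) (Fin M) ℝ)
    (i i' j : Fin N) (hne : i ≠ i')
    (hi'j : A i' j ≠ 0)
    (hrow_i : ∀ l, l ≠ j → A i l = 0)
    (hrow_i' : ∀ l, l ≠ j → A i' l = 0)
    (hBi : ∀ p, B i p = 0) (hBi' : ∀ p, B i' p = 0)
    (Q : Matrix (Fin N) (Fin N × Fin M) ℝ)
    (hQ : Q = fun a p => (A ^ (p.1 : ℕ) * B) a p.2) :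
    (∀ p, Q i p = (A i j / A i' j) * Q i' p) ∧ Q.rank < N := by
  have hA : A i = (A i j / A i' j) • A i' :=
    Pi.eq_div_smul_of_eq_zero_of_ne hrow_i hrow_i' hi'j
  have hB : B i = (A i j / A i' j) • B i' := by
    funext p
    simp [hBi, hBi']
  have hQrow : ∀ p, Q i p = (A i j / A i' j) * Q i' p := fun p => by
    rw [hQ]
    exact congrFun (Matrix.pow_mul_row_eq_smul_of_row_eq_smul hA hB p.1) p.2
  refine ⟨hQrow, ?_⟩
  simpa using Matrix.rank_lt_card_height_of_row_eq_smul hne (funext hQrow : Q i = _ • Q i')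

/-- If nodes `i ≠ i'` each have a unique in-edge, both coming
from node `j` (so `A i j ≠ 0`, `A i' j ≠ 0` and all other entries of rows
`i`, `i'` vanish), and the input matrix `B` has rows `i` and `i'`
identically zero, then row `i` of the Kalman matrix
`Q = [B, AB, ..., A^{N-1}B]` equals `(A i j / A i' j)` times row `i'`,
so `rank Q < N` and the system cannot be controllable, regardless of the
free weight values. -/
theorem two_out_neighbors_unique_in_edge_not_controllable
    (N M : ℕ) (A : Matrix (Fin N) (Fin N) ℝ) (B : Matrix (Fin N) (Fin M) ℝ)
    (i i' j : Fin N) (hne : i ≠ i')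
    (hij : A i j ≠ 0) (hi'j : A i' j ≠ 0)
    (hrow_i : ∀ l, l ≠ j → A i l = 0)
    (hrow_i' : ∀ l, l ≠ j → A i' l = 0)
    (hBi : ∀ p, B i p = 0) (hBi' : ∀ p, B i' p = 0)
    (Q : Matrix (Fin N) (Fin N × Fin M) ℝ)
    (hQ : Q = fun a p => (A ^ (p.1 : ℕ) * B) a p.2) :
    (∀ p, Q i p = (A i j / A i' j) * Q i' p) ∧ Q.rank < N :=
  two_out_neighbors_unique_in_edge_not_controllable_general N M A B i i' j hne hi'j hrow_i hrow_i'
    hBi hBi' Q hQ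
end

section
/- If two rows i and i' of the Kalman matrix Q = [B, AB, ..., A^{N-1}B] are linearly dependent (one a scalar multiple of the other), then for any solution with x(0) = 0 the states x_i(t) and x_{i'}(t) satisfy the same linear dependence for all t. -/
/-!
By Cayley–Hamilton every power of `A` is a combination of `1, A, …, A^(N-1)`, so the relation
between rows `i` and `i'` of `A^k B` holds for every `k`. Hence the subspace `V` of vectors `v`
with `(A^k v)_i = c (A^k v)_{i'}` for all `k` is `A`-invariant and contains the range of `B`.
A solution of `x' = A x + g` with `g(t) ∈ V` and `x(0) ∈ V` stays in `V`: its image in `E ⧸ V`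
solves the linear ODE `z' = Ā z` with `z(0) = 0`, so it vanishes by uniqueness of solutions.
-/

open Polynomial in
theorem Matrix.pow_mem_span_pow_lt_card {n R : Type*} [Fintype n] [DecidableEq n] [CommRing R]
    [Nontrivial R] (A : Matrix n n R) (k : ℕ) :
    A ^ k ∈ Submodule.span R (Set.range fun j : Fin (Fintype.card n) => A ^ (j : ℕ)) := by
  cases isEmpty_or_nonempty n
  · exact Subsingleton.elim (0 : Matrix n n R) (A ^ k) ▸ zero_mem _
  have hdeg : (X ^ k %ₘ A.charpoly).natDegree < Fintype.card n := by
    have := natDegree_modByMonic_lt (X ^ k) A.charpoly_monic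
      fun h => Fintype.card_ne_zero (α := n) (by simpa [h] using A.charpoly_natDegree_eq_dim.symm)
    rwa [A.charpoly_natDegree_eq_dim] at this
  rw [A.pow_eq_aeval_mod_charpoly, aeval_eq_sum_range' hdeg, ← Fin.sum_univ_eq_sum_range]
  exact Submodule.sum_mem _ fun j _ => Submodule.smul_mem _ _ (Submodule.subset_span ⟨j, rfl⟩)

theorem Matrix.pow_mul_apply_eq_smul_of_forall_lt_card {n m R : Type*} [Fintype n]
    [DecidableEq n] [CommRing R] [Nontrivial R] (A : Matrix n n R) (B : Matrix n m R)
    {i i' : n} {c : R} (h : ∀ k < Fintype.card n, (A ^ k * B) i = c • (A ^ k * B) i') (k : ℕ) :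
    (A ^ k * B) i = c • (A ^ k * B) i' := by
  obtain ⟨a, ha⟩ := (Submodule.mem_span_range_iff_exists_fun R).1 (A.pow_mem_span_pow_lt_card k)
  ext p
  simp only [← ha, Matrix.sum_mul, Matrix.sum_apply, Matrix.smul_mul, Matrix.smul_apply,
    smul_eq_mul, Pi.smul_apply, h _ (Fin.isLt _), Finset.mul_sum]
  exact Finset.sum_congr rfl fun j _ => by ring

theorem Submodule.mem_of_hasDerivAt_of_le_comap {E : Type*} [NormedAddCommGroup E]
    [NormedSpace ℝ E] [FiniteDimensional ℝ E] {A : E →ₗ[ℝ] E} {V : Submodule ℝ E}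
    (hA : V ≤ V.comap A) {x g : ℝ → E} (hx : ∀ t, HasDerivAt x (A (x t) + g t) t)
    (hg : ∀ t, g t ∈ V) {t₀ : ℝ} (hx₀ : x t₀ ∈ V) (t : ℝ) : x t ∈ V := by
  have : IsClosed (V : Set E) := V.closed_of_finiteDimensional
  let Ā : (E ⧸ V) →L[ℝ] E ⧸ V := LinearMap.toContinuousLinearMap (V.mapQ V A hA)
  have hπx : ∀ t, HasDerivAt (V.mkQ ∘ x) (Ā (V.mkQ (x t))) t := fun t => by
    refine (V.mkQL.hasFDerivAt.comp_hasDerivAt t (hx t)).congr_deriv ?_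
    simp [Ā, (Submodule.Quotient.mk_eq_zero V).2 (hg t)]
  have h0 : ∀ t, HasDerivAt (0 : ℝ → E ⧸ V) (Ā 0) t := fun t => by
    simp only [map_zero]
    exact hasDerivAt_const t 0
  have := ODE_solution_unique_univ (v := fun _ => Ā) (s := fun _ => Set.univ)
    (fun _ => Ā.lipschitz.lipschitzOnWith) (fun t => ⟨hπx t, trivial⟩) (fun t => ⟨h0 t, trivial⟩)
    ((Submodule.Quotient.mk_eq_zero V).2 hx₀)
  exact (Submodule.Quotient.mk_eq_zero V).1 (congrFun this t)

open Matrix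

theorem dependent_kalman_rows_give_dependent_states_general
    (N M : ℕ) (A : Matrix (Fin N) (Fin N) ℝ) (B : Matrix (Fin N) (Fin M) ℝ)
    (i i' : Fin N) (c : ℝ)
    (hrows : ∀ k : ℕ, k < N → ∀ p : Fin M, (A ^ k * B) i p = c * (A ^ k * B) i' p)
    (u : ℝ → Fin M → ℝ)
    (x : ℝ → Fin N → ℝ)
    (hx : ∀ t : ℝ, HasDerivAt x (A.mulVec (x t) + B.mulVec (u t)) t)
    (hx0 : x 0 = 0) :
    ∀ t : ℝ, x t i = c * x t i' := by
  have hall := A.pow_mul_apply_eq_smul_of_forall_lt_card B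
    fun k hk => funext (hrows k (by simpa using hk))
  let φ : (Fin N → ℝ) →ₗ[ℝ] ℝ := LinearMap.proj i - c • LinearMap.proj i'
  let V : Submodule ℝ (Fin N → ℝ) := ⨅ k : ℕ, LinearMap.ker (φ ∘ₗ toLin' A ^ k)
  have hV : ∀ v, v ∈ V ↔ ∀ k : ℕ, (A ^ k *ᵥ v) i = c * (A ^ k *ᵥ v) i' := by
    simp [V, φ, sub_eq_zero, ← toLin'_pow]
  have hAV : V ≤ V.comap (toLin' A) := fun v hv => (hV _).2 fun k => by
    simpa [mulVec_mulVec, ← pow_succ] using (hV v).1 hv (k + 1)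
  have hBV : ∀ w, B *ᵥ w ∈ V := fun w => (hV _).2 fun k => by
    rw [mulVec_mulVec]
    change (A ^ k * B) i ⬝ᵥ w = c * ((A ^ k * B) i' ⬝ᵥ w)
    rw [hall k, smul_dotProduct, smul_eq_mul]
  intro t
  simpa using (hV _).1 (V.mem_of_hasDerivAt_of_le_comap hAV hx (fun t => hBV (u t))
    (hx0 ▸ V.zero_mem) t) 0

/-- If rows `i` and `i'` of the Kalman matrix are linearly
dependent — there is `c : ℝ` with `row_i (A^k B) = c · row_{i'} (A^k B)` for
all `0 ≤ k ≤ N−1` — then for any solution of `dx/dt = Ax + Bu` with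
`x(0) = 0`, the states satisfy the same dependence: `x_i(t) = c · x_{i'}(t)`
for all `t`. -/
theorem dependent_kalman_rows_give_dependent_states
    (N M : ℕ) (A : Matrix (Fin N) (Fin N) ℝ) (B : Matrix (Fin N) (Fin M) ℝ)
    (i i' : Fin N) (c : ℝ)
    (hrows : ∀ k : ℕ, k < N → ∀ p : Fin M, (A ^ k * B) i p = c * (A ^ k * B) i' p)
    (u : ℝ → Fin M → ℝ) (hu : Continuous u)
    (x : ℝ → Fin N → ℝ)
    (hx : ∀ t : ℝ, HasDerivAt x (A.mulVec (x t) + B.mulVec (u t)) t)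
    (hx0 : x 0 = 0) :
    ∀ t : ℝ, x t i = c * x t i' :=
  dependent_kalman_rows_give_dependent_states_general N M A B i i' c hrows u x hx hx0
end
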